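/- A Lucas number L_n is of the form m² − 2 for some integer m if and only if n is divisible by 4. -/
import Mathlib

/-- The Lucas numbers: `L₀ = 2`, `L₁ = 1`, `L_{n+1} = L_n + L_{n−1}`. -/
def lucasL : ℕ → ℤ
  | 0 => 2
  | 1 => 1
  | n + 2 => lucasL (n + 1) + lucasL n

namespace Stmt16

noncomputable def F : ℕ → ℤ := fun n => (Nat.fib n : ℤ)

lemma L0 : lucasL 0 = 2 := rfl
lemma L1 : lucasL 1 = 1 := rfl
lemma Lrec (n : ℕ) : lucasL (n+2) = lucasL (n+1) + lucasL n := rfl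
lemma F0 : F 0 = 0 := rfl
lemma F1 : F 1 = 1 := rfl
lemma Frec (n : ℕ) : F (n+2) = F (n+1) + F n := by
  unfold F; rw [Nat.fib_add_two]; push_cast; ring

/-- two-step induction -/
lemma rec2 {P : ℕ → Prop} (h0 : P 0) (h1 : P 1)
    (h : ∀ n, P n → P (n+1) → P (n+2)) : ∀ n, P n := by
  intro n
  induction n using Nat.twoStepInduction with
  | zero => exact h0
  | one => exact h1
  | more n ih1 ih2 => exact h n ih1 ih2

/-- addition formula at b = 1 -/
lemma add_one (a : ℕ) : 2 * lucasL (a+1) = lucasL a + 5 * F a ∧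
    2 * F (a+1) = lucasL a + F a := by
  induction a using rec2 with
  | h0 => norm_num [L0, L1, F0, F1]
  | h1 => norm_num [L1, Lrec, L0, F0, F1, Frec]
  | h n ih1 ih2 =>
    obtain ⟨a1, a2⟩ := ih1; obtain ⟨b1, b2⟩ := ih2
    constructor
    · rw [Lrec, Lrec, Frec]; linarith
    · rw [Frec, Frec, Lrec]; linarith

/-- general addition formulas -/
lemma addf (b a : ℕ) : 2 * lucasL (a+b) = lucasL a * lucasL b + 5 * F a * F b ∧
    2 * F (a+b) = lucasL a * F b + F a * lucasL b := by
  induction b using rec2 with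
  | h0 => simp [L0, F0]; ring_nf; simp [mul_comm]
  | h1 =>
    obtain ⟨c1, c2⟩ := add_one a
    constructor
    · rw [L1, F1]; linarith
    · rw [L1, F1]; linarith
  | h b ih1 ih2 =>
    obtain ⟨a1, a2⟩ := ih1; obtain ⟨b1, b2⟩ := ih2
    have e1 : a + (b+2) = (a + (b+1)) + 1 + 0 := by ring
    constructor
    · have : a + (b + 2) = (a + b) + 2 := by ring
      rw [this, Lrec, Frec, Lrec]
      have : a + b + 1 = a + (b+1) := by ring
      rw [this]; linarith
    · have : a + (b + 2) = (a + b) + 2 := by ring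
      rw [this, Frec (a+b), Frec, Lrec]
      have : a + b + 1 = a + (b+1) := by ring
      rw [this]; linarith


/-- Pell-type identity L² − 5F² = 4(−1)ⁿ, with companion. -/
lemma pell (n : ℕ) : lucasL n ^ 2 - 5 * F n ^ 2 = 4 * (-1)^n ∧
    lucasL (n+1) ^ 2 - 5 * F (n+1) ^ 2 = 4 * (-1)^(n+1) ∧
    lucasL n * lucasL (n+1) - 5 * F n * F (n+1) = 2 * (-1)^n := by
  induction n with
  | zero => norm_num [L0, L1, F0, F1, Lrec, Frec]
  | succ n ih =>
    obtain ⟨a, b, c⟩ := ih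
    refine ⟨b, ?_, ?_⟩
    · rw [Lrec, Frec]
      have : (-1 : ℤ)^(n+1+1) = (-1)^n := by ring
      rw [this]
      have h1 : (-1 : ℤ)^(n+1) = -(-1)^n := by ring
      rw [h1] at b
      nlinarith [a, b, c]
    · rw [Lrec, Frec]
      have h1 : (-1 : ℤ)^(n+1) = -(-1)^n := by ring
      rw [h1] at b ⊢
      nlinarith [a, b, c]

lemma Fdouble (a : ℕ) : F (2*a) = F a * lucasL a := by
  have := (addf a a).2
  have e : a + a = 2*a := by ring
  rw [e] at this; linarith

lemma Ldouble (a : ℕ) : lucasL (2*a) = lucasL a ^ 2 - 2 * (-1)^a := by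
  have h := (addf a a).1
  have e : a + a = 2*a := by ring
  rw [e] at h
  have p := (pell a).1
  nlinarith [h, p]

/-- quadratic identity -/
lemma quadL (k : ℕ) : lucasL k ^ 2 + lucasL k * lucasL (k+1) - lucasL (k+1) ^ 2
    = 5 * (-1)^k := by
  induction k with
  | zero => norm_num [L0, L1, Lrec]
  | succ k ih =>
    rw [Lrec]
    have : (-1 : ℤ)^(k+1) = -(-1)^k := by ring
    rw [this]; nlinarith [ih]

/-- key congruence identity -/
lemma keyid (m j : ℕ) : lucasL (m + 2*j) + (-1)^j * lucasL m
    = lucasL j * lucasL (m + j) := by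
  have h1 := (addf (2*j) m).1
  have h2 := (addf j m).1
  have hL := Ldouble j
  have hF := Fdouble j
  have h4 : 2 * (lucasL (m + 2*j) + (-1)^j * lucasL m) = 2 * (lucasL j * lucasL (m + j)) := by
    linear_combination h1 + lucasL m * hL + 5 * F m * hF - lucasL j * h2
  exact mul_left_cancel₀ (two_ne_zero) h4

/-- iterated congruence, j even -/
lemma iter (j : ℕ) (hj : Even j) (t m : ℕ) :
    lucasL j ∣ lucasL (m + 2*j*t) - (-1)^t * lucasL m := by
  induction t with
  | zero => simp
  | succ t ih =>
    have e : m + 2*j*(t+1) = (m + 2*j*t) + 2*j := by ring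
    have hk := keyid (m + 2*j*t) j
    rw [hj.neg_one_pow] at hk
    have : lucasL (m + 2*j*(t+1)) - (-1)^(t+1) * lucasL m
        = lucasL j * lucasL (m + 2*j*t + j) - (lucasL (m + 2*j*t) - (-1)^t * lucasL m) := by
      have hp : (-1:ℤ)^(t+1) = -(-1)^t := by ring
      rw [e, hp]; linarith [hk]
    rw [this]
    exact dvd_sub (Dvd.intro _ rfl) ih

lemma Lpos : ∀ k, 1 ≤ lucasL k := by
  refine rec2 (by norm_num [L0]) (by norm_num [L1]) ?_
  intro n h1 h2; rw [Lrec]; linarith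


/-- properties of L(2^c) mod 4, 2, 5 -/
lemma Lpow2 (c : ℕ) (hc : 1 ≤ c) :
    (4:ℤ) ∣ lucasL (2^c) - 3 ∧ ¬ (2:ℤ) ∣ lucasL (2^c) ∧
    (2 ≤ c → (5:ℤ) ∣ lucasL (2^c) - 2) := by
  induction c with
  | zero => omega
  | succ c ih =>
    have hL2 : lucasL 2 = 3 := by
      show lucasL (0+2) = 3
      rw [Lrec]; rw [L1, L0]; norm_num
    rcases Nat.eq_or_lt_of_le hc with h1 | h1
    · have : c = 0 := by omega
      subst this
      refine ⟨?_, ?_, by omega⟩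
      · rw [pow_one, hL2]; norm_num
      · rw [pow_one, hL2]; decide
    · have hc1 : 1 ≤ c := by omega
      obtain ⟨m4, m2, m5⟩ := ih hc1
      have heven : Even (2^c) := (Nat.even_pow).mpr ⟨even_two, by omega⟩
      have hd : lucasL (2^(c+1)) = lucasL (2^c) ^ 2 - 2 := by
        have e : 2^(c+1) = 2 * 2^c := by ring
        rw [e, Ldouble, heven.neg_one_pow]; ring
      obtain ⟨a, ha⟩ := m4
      have hLa : lucasL (2^c) = 4*a + 3 := by linarith
      refine ⟨?_, ?_, ?_⟩
      · rw [hd, hLa]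
        exact ⟨4*a^2 + 6*a + 1, by ring⟩
      · rw [hd, hLa]
        rintro ⟨b, hb⟩
        have : 16*a^2 + 24*a + 7 = 2*b := by linear_combination hb
        omega
      · intro _
        rcases Nat.lt_or_ge c 2 with h2 | h2
        · have : c = 1 := by omega
          subst this
          rw [hd, pow_one, hL2]; norm_num
        · obtain ⟨b, hb⟩ := m5 h2
          rw [hd]
          have : lucasL (2^c) = 5*b + 2 := by linarith
          rw [this]
          exact ⟨5*b^2 + 4*b, by ring⟩

/-- extraction of a prime ≡ 3 mod 4 -/
lemma exists_prime_4 : ∀ N : ℕ, N % 4 = 3 → ∃ p, p.Prime ∧ p ∣ N ∧ p % 4 = 3 := by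
  intro N
  induction N using Nat.strong_induction_on with
  | _ N ih =>
    intro hN
    have hN1 : N ≠ 1 := by omega
    obtain ⟨p, hp, hpd⟩ := Nat.exists_prime_and_dvd hN1
    have hp2 : p ≠ 2 := by
      rintro rfl
      obtain ⟨k, hk⟩ := hpd
      omega
    have hpodd : p % 2 = 1 := Nat.odd_iff.mp (hp.odd_of_ne_two hp2)
    rcases Nat.lt_or_ge (p % 4) 3 with h3 | h3
    · have hp4 : p % 4 = 1 := by omega
      obtain ⟨M, hM⟩ := hpd
      have hM4 : M % 4 = 3 := by
        have h := Nat.mul_mod p M 4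
        rw [← hM, hp4] at h
        omega
      have hMlt : M < N := by
        have hp2' : 2 ≤ p := hp.two_le
        have hM0 : 0 < M := by
          rcases Nat.eq_zero_or_pos M with h | h
          · subst h; simp at hM; omega
          · exact h
        calc M < p * M := by nlinarith
        _ = N := hM.symm
      obtain ⟨q, hq, hqd, hq4⟩ := ih M hMlt hM4
      exact ⟨q, hq, hM ▸ Dvd.dvd.mul_left hqd p, hq4⟩
    · have h4 : p % 4 < 4 := Nat.mod_lt _ (by norm_num)
      exact ⟨p, hp, hpd, by omega⟩

/-- extraction of a prime ≡ ±2 mod 5 -/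
lemma exists_prime_5 : ∀ N : ℕ, (N % 5 = 2 ∨ N % 5 = 3) →
    ∃ p, p.Prime ∧ p ∣ N ∧ (p % 5 = 2 ∨ p % 5 = 3) := by
  intro N
  induction N using Nat.strong_induction_on with
  | _ N ih =>
    intro hN
    have hN1 : N ≠ 1 := by omega
    obtain ⟨p, hp, hpd⟩ := Nat.exists_prime_and_dvd hN1
    have hp5 : p % 5 ≠ 0 := by
      intro h
      have hdp : (5:ℕ) ∣ p := Nat.dvd_of_mod_eq_zero h
      have : p = 5 := ((Nat.prime_dvd_prime_iff_eq (by norm_num) hp).mp hdp).symm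
      subst this
      obtain ⟨k, hk⟩ := hpd
      omega
    by_cases hgood : p % 5 = 2 ∨ p % 5 = 3
    · exact ⟨p, hp, hpd, hgood⟩
    · have hp51 : p % 5 = 1 ∨ p % 5 = 4 := by
        have : p % 5 < 5 := Nat.mod_lt _ (by norm_num)
        omega
      obtain ⟨M, hM⟩ := hpd
      have hM5 : M % 5 = 2 ∨ M % 5 = 3 := by
        have h := Nat.mul_mod p M 5
        rw [← hM] at h
        rcases hp51 with h1 | h1 <;> rw [h1] at h <;> omega
      have hMlt : M < N := by
        have hp2' : 2 ≤ p := hp.two_le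
        have hM0 : 0 < M := by
          rcases Nat.eq_zero_or_pos M with h | h
          · subst h; simp at hM; omega
          · exact h
        calc M < p * M := by nlinarith
        _ = N := hM.symm
      obtain ⟨q, hq, hqd, hq5⟩ := ih M hMlt hM5
      exact ⟨q, hq, hM ▸ Dvd.dvd.mul_left hqd p, hq5⟩


instance : Fact (Nat.Prime 5) := ⟨by norm_num⟩

lemma leg52 : legendreSym 5 2 = -1 := by decide
lemma leg53 : legendreSym 5 3 = -1 := by decide

/-- If p ≡ 3 mod 4 and p ∣ a² + b², then p ∣ a and p ∣ b. -/
lemma sq_add_sq_case (p : ℕ) (hp : p.Prime) (hp4 : p % 4 = 3) (a b : ℤ)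
    (h : (p:ℤ) ∣ a^2 + b^2) : (p:ℤ) ∣ a ∧ (p:ℤ) ∣ b := by
  haveI : Fact p.Prime := ⟨hp⟩
  have hz : ((a:ZMod p))^2 + ((b:ZMod p))^2 = 0 := by
    have := (ZMod.intCast_zmod_eq_zero_iff_dvd (a^2+b^2) p).mpr h
    push_cast at this
    exact this
  by_cases hb : (b : ZMod p) = 0
  · have ha : ((a:ZMod p))^2 = 0 := by rw [hb] at hz; simpa using hz
    have ha' : (a : ZMod p) = 0 := by
      exact pow_eq_zero_iff (n := 2) (by norm_num) |>.mp ha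
    exact ⟨(ZMod.intCast_zmod_eq_zero_iff_dvd a p).mp ha',
           (ZMod.intCast_zmod_eq_zero_iff_dvd b p).mp hb⟩
  · exfalso
    have hsq : IsSquare (-1 : ZMod p) := by
      refine ⟨(a:ZMod p) * ((b:ZMod p))⁻¹, ?_⟩
      have hb2 : ((b:ZMod p))^2 ≠ 0 := pow_ne_zero _ hb
      field_simp
      linear_combination -hz
    exact (ZMod.exists_sq_eq_neg_one_iff.mp hsq) hp4
/-- 5 is a non-residue mod p when p ≡ ±2 mod 5. -/
lemma five_nonsquare (p : ℕ) (hp : p.Prime) (hp2 : p ≠ 2)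
    (hp5 : p % 5 = 2 ∨ p % 5 = 3) : ¬ IsSquare (5 : ZMod p) := by
  haveI : Fact p.Prime := ⟨hp⟩
  have hrec : legendreSym p 5 = legendreSym 5 p :=
    legendreSym.quadratic_reciprocity_one_mod_four (p := 5) (q := p) (by norm_num) hp2
  have hmod : legendreSym 5 p = legendreSym 5 ((p : ℤ) % 5) := legendreSym.mod 5 p
  have hp5' : ((p : ℤ) % 5 = 2) ∨ ((p : ℤ) % 5 = 3) := by
    rcases hp5 with h | h <;> [left; right] <;> omega
  have hneg : legendreSym p 5 = -1 := by
    rw [hrec, hmod]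
    rcases hp5' with h | h <;> rw [h]
    · exact leg52
    · exact leg53
  have := (legendreSym.eq_neg_one_iff p (a := 5)).mp hneg
  intro hsq
  apply this
  have : ((5:ℤ) : ZMod p) = (5 : ZMod p) := by push_cast; rfl
  rw [this]
  exact hsq


/-- the common ending: a prime dividing both L(s-1)-side fib and L(2s) is absurd -/
lemma fib_gcd_contra (p s : ℕ) (hp : p.Prime) (hs2 : 2 ∣ s) (hs : 2 ≤ s)
    (h1 : p ∣ Nat.fib (2*(s-1))) (h2 : p ∣ Nat.fib (2*(2*s))) : False := by
  have hg : p ∣ Nat.gcd (Nat.fib (2*(s-1))) (Nat.fib (2*(2*s))) :=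
    Nat.dvd_gcd h1 h2
  rw [← Nat.fib_gcd] at hg
  have hgcd : Nat.gcd (2*(s-1)) (2*(2*s)) = 2 := by
    rw [Nat.gcd_mul_left]
    have h1 : Nat.gcd (s-1) (2*s) = 1 := by
      set d := Nat.gcd (s-1) (2*s) with hd
      have hd1 : d ∣ s - 1 := Nat.gcd_dvd_left _ _
      have hd2 : d ∣ 2*s := Nat.gcd_dvd_right _ _
      have hdd : d ∣ 2 := by
        have : d ∣ 2*s - 2*(s-1) := Nat.dvd_sub hd2 (Dvd.dvd.mul_left hd1 2)
        have he : 2*s - 2*(s-1) = 2 := by omega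
        rwa [he] at this
      rcases (Nat.dvd_prime Nat.prime_two).mp hdd with h | h
      · exact h
      · exfalso
        rw [h] at hd1
        obtain ⟨k, hk⟩ := hd1
        obtain ⟨l, hl⟩ := hs2
        omega
    rw [h1]
  rw [hgcd] at hg
  simp [Nat.fib_two] at hg
  exact hp.one_lt.ne' hg

/-- The main hard case : n ≡ 3 mod 4. -/
lemma case3 (n : ℕ) (hn : n % 4 = 3) (m : ℤ) (hm : lucasL n = m^2 - 2) : False := by
  have hn0 : n + 1 ≠ 0 := by omega
  set c := (n+1).factorization 2 with hcdef
  have h4 : (2:ℕ)^2 ∣ n+1 := ⟨(n+1)/4, by omega⟩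
  have hc2 : 2 ≤ c := (Nat.Prime.pow_dvd_iff_le_factorization Nat.prime_two hn0).mp h4
  set u := (n+1) / 2^c with hudef
  have hfact : 2^c * u = n+1 := Nat.ordProj_mul_ordCompl_eq_self (n+1) 2
  have hu_odd : ¬ 2 ∣ u := Nat.not_dvd_ordCompl Nat.prime_two hn0
  set j := 2^c with hjdef
  set s := 2^(c-1) with hsdef
  have hjs : j = 2*s := by
    rw [hjdef, hsdef]
    have e : c - 1 + 1 = c := by omega
    have e2 : 2^c = 2^(c-1) * 2 := by rw [← pow_succ, e]
    rw [e2]; ring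
  have hs2 : 2 ∣ s := by
    rw [hsdef]
    exact dvd_pow_self 2 (by omega)
  have hs_ge : 2 ≤ s := Nat.le_of_dvd (by positivity) hs2
  have hj4 : 4 ≤ j := by omega
  set t := u / 2 with htdef
  have hu2t : u = 2*t + 1 := by omega
  have hnjt : n = (j - 1) + 2*j*t := by
    have hw : 2*(j*t) + j = n+1 := by rw [← hfact, hu2t]; ring
    have e : 2*j*t = 2*(j*t) := by ring
    omega
  obtain ⟨hN4, hN2, hN5'⟩ := Lpow2 c (by omega)
  have hN5 := hN5' hc2
  rw [← hjdef] at hN4 hN2 hN5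
  set N := lucasL j with hNdef
  have hNpos : 1 ≤ N := Lpos j
  -- congruence
  have hcong : N ∣ lucasL n - (-1)^t * lucasL (j-1) := by
    have := iter j ⟨s, by omega⟩ t (j-1)
    rwa [← hnjt] at this
  -- identities
  have hsm1 : s - 1 + 1 = s := by omega
  have hLjm1 : lucasL (j-1) = lucasL (s-1) * lucasL s + 1 := by
    have hk := keyid 1 (s-1)
    have e1 : 1 + 2*(s-1) = j - 1 := by omega
    have e2 : 1 + (s-1) = s := by omega
    have hodd : Odd (s - 1) := by
      obtain ⟨l, hl⟩ := hs2; exact ⟨l - 1, by omega⟩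
    rw [e1, e2, hodd.neg_one_pow, L1] at hk
    linarith
  have hquad : lucasL (s-1)^2 + lucasL (s-1) * lucasL s - lucasL s ^2 = -5 := by
    have hq := quadL (s-1)
    have hodd : Odd (s - 1) := by
      obtain ⟨l, hl⟩ := hs2; exact ⟨l - 1, by omega⟩
    rw [hsm1, hodd.neg_one_pow] at hq
    linarith
  have hNs : N = lucasL s ^ 2 - 2 := by
    rw [hNdef, hjs, Ldouble, (even_iff_two_dvd.mpr hs2).neg_one_pow]
    ring
  have hpell : lucasL (s-1)^2 - 5 * F (s-1)^2 = -4 := by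
    have hp := (pell (s-1)).1
    have hodd : Odd (s - 1) := by
      obtain ⟨l, hl⟩ := hs2; exact ⟨l - 1, by omega⟩
    rw [hodd.neg_one_pow] at hp
    linarith
  -- N as a natural number
  set Nn := N.toNat with hNndef
  have hNcast : (Nn : ℤ) = N := Int.toNat_of_nonneg (by linarith)
  rcases Nat.even_or_odd t with hte | hto
  · -- t even : N ∣ m² + L(s−1)²
    have hsign : ((-1:ℤ))^t = 1 := hte.neg_one_pow
    rw [hsign, one_mul] at hcong
    have hdvd : N ∣ m^2 + lucasL (s-1)^2 := by
      have : m^2 + lucasL (s-1)^2 = (lucasL n - lucasL (j-1)) + N := by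
        rw [hm, hLjm1, hNs]; linarith [hquad]
      rw [this]
      exact dvd_add hcong (dvd_refl N)
    have hNn4 : Nn % 4 = 3 := by omega
    obtain ⟨p, hp, hpd, hp4⟩ := exists_prime_4 Nn hNn4
    have hpZ : (p:ℤ) ∣ m^2 + lucasL (s-1)^2 := by
      refine dvd_trans ?_ hdvd
      rw [← hNcast]
      exact Int.natCast_dvd_natCast.mpr hpd
    obtain ⟨hpm, hpy⟩ := sq_add_sq_case p hp hp4 m (lucasL (s-1)) hpZ
    -- p ∣ L(s−1) ⇒ p ∣ fib(2(s−1)) ; p ∣ N = L(2s) ⇒ p ∣ fib(4s)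
    have hf1 : (p:ℤ) ∣ F (2*(s-1)) := by
      rw [Fdouble]; exact Dvd.dvd.mul_left hpy _
    have hf2 : (p:ℤ) ∣ F (2*(2*s)) := by
      rw [Fdouble]
      have : (p:ℤ) ∣ lucasL (2*s) := by
        rw [← hjs, ← hNdef, ← hNcast]
        exact Int.natCast_dvd_natCast.mpr hpd
      exact Dvd.dvd.mul_left this _
    exact fib_gcd_contra p s hp hs2 hs_ge
      (Int.natCast_dvd_natCast.mp hf1) (Int.natCast_dvd_natCast.mp hf2)
  · -- t odd : N ∣ m² − 5 F(s−1)²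
    have hsign : ((-1:ℤ))^t = -1 := hto.neg_one_pow
    rw [hsign] at hcong
    have hdvd : N ∣ m^2 - 5 * F (s-1)^2 := by
      have : m^2 - 5 * F (s-1)^2 = (lucasL n - (-1) * lucasL (j-1)) - N := by
        rw [hm, hLjm1, hNs]; linarith [hquad, hpell]
      rw [this]
      exact dvd_sub hcong (dvd_refl N)
    have hNn5 : Nn % 5 = 2 := by omega
    obtain ⟨p, hp, hpd, hp5⟩ := exists_prime_5 Nn (Or.inl hNn5)
    have hp2 : p ≠ 2 := by
      rintro rfl
      apply hN2
      rw [← hNcast]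
      exact Int.natCast_dvd_natCast.mpr hpd
    haveI : Fact p.Prime := ⟨hp⟩
    have hpZ : (p:ℤ) ∣ m^2 - 5 * F (s-1)^2 := by
      refine dvd_trans ?_ hdvd
      rw [← hNcast]
      exact Int.natCast_dvd_natCast.mpr hpd
    have hzer : ((m:ZMod p))^2 - 5 * ((F (s-1) : ZMod p))^2 = 0 := by
      have := (ZMod.intCast_zmod_eq_zero_iff_dvd _ p).mpr hpZ
      push_cast at this
      linear_combination this
    by_cases hFz : ((F (s-1) : ZMod p)) = 0
    · -- p ∣ fib (s−1)
      have hpf : (p:ℤ) ∣ F (s-1) := (ZMod.intCast_zmod_eq_zero_iff_dvd _ p).mp hFz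
      have hpf' : p ∣ Nat.fib (s-1) := by
        have : F (s-1) = ((Nat.fib (s-1) : ℤ)) := rfl
        rw [this] at hpf
        exact Int.natCast_dvd_natCast.mp hpf
      have hf1 : p ∣ Nat.fib (2*(s-1)) :=
        dvd_trans hpf' (Nat.fib_dvd _ _ ⟨2, by ring⟩)
      have hf2 : (p:ℤ) ∣ F (2*(2*s)) := by
        rw [Fdouble]
        have : (p:ℤ) ∣ lucasL (2*s) := by
          rw [← hjs, ← hNdef, ← hNcast]
          exact Int.natCast_dvd_natCast.mpr hpd
        exact Dvd.dvd.mul_left this _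
      exact fib_gcd_contra p s hp hs2 hs_ge hf1 (Int.natCast_dvd_natCast.mp hf2)
    · -- 5 is a square mod p : contradiction
      apply five_nonsquare p hp hp2 hp5
      refine ⟨(m:ZMod p) * ((F (s-1) : ZMod p))⁻¹, ?_⟩
      have h2 : ((F (s-1) : ZMod p))^2 ≠ 0 := pow_ne_zero _ hFz
      field_simp
      linear_combination -hzer

/-- period-4 step mod 5 -/
lemma step5 : ∀ k, (5:ℤ) ∣ lucasL (k+4) - lucasL k := by
  refine rec2 ?_ ?_ ?_
  · show (5:ℤ) ∣ lucasL 4 - lucasL 0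
    have h2 : lucasL 2 = 3 := by rw [show (2:ℕ) = 0+2 from rfl, Lrec, L1, L0]; norm_num
    have h3 : lucasL 3 = 4 := by rw [show (3:ℕ) = 1+2 from rfl, Lrec, h2, L1]; norm_num
    have h4 : lucasL 4 = 7 := by rw [show (4:ℕ) = 2+2 from rfl, Lrec, h3, h2]; norm_num
    rw [h4, L0]; norm_num
  · show (5:ℤ) ∣ lucasL 5 - lucasL 1
    have h2 : lucasL 2 = 3 := by rw [show (2:ℕ) = 0+2 from rfl, Lrec, L1, L0]; norm_num
    have h3 : lucasL 3 = 4 := by rw [show (3:ℕ) = 1+2 from rfl, Lrec, h2, L1]; norm_num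
    have h4 : lucasL 4 = 7 := by rw [show (4:ℕ) = 2+2 from rfl, Lrec, h3, h2]; norm_num
    have h5 : lucasL 5 = 11 := by rw [show (5:ℕ) = 3+2 from rfl, Lrec, h4, h3]; norm_num
    rw [h5, L1]; norm_num
  · intro k h1 h2
    have e : k + 2 + 4 = (k+4) + 2 := by ring
    rw [e, Lrec, Lrec k]
    have e2 : k + 4 + 1 = (k+1) + 4 := by ring
    rw [e2]
    obtain ⟨a, ha⟩ := h1
    obtain ⟨b, hb⟩ := h2
    exact ⟨a + b, by linarith⟩

lemma mod5 (q r : ℕ) : (5:ℤ) ∣ lucasL (r + 4*q) - lucasL r := by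
  induction q with
  | zero => simp
  | succ q ih =>
    have e : r + 4*(q+1) = (r + 4*q) + 4 := by ring
    rw [e]
    obtain ⟨a, ha⟩ := step5 (r + 4*q)
    obtain ⟨b, hb⟩ := ih
    exact ⟨a + b, by linarith⟩

lemma case1 (n : ℕ) (hn : n % 4 = 1) (m : ℤ) (hm : lucasL n = m^2 - 2) : False := by
  have he : n = 1 + 4*(n/4) := by omega
  have h := mod5 (n/4) 1
  rw [← he, L1] at h
  have h3 : (5:ℤ) ∣ m^2 - 3 := by
    obtain ⟨a, ha⟩ := h
    exact ⟨a, by linarith⟩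
  have hz : ((m : ZMod 5))^2 = 3 := by
    have := (ZMod.intCast_zmod_eq_zero_iff_dvd (m^2-3) 5).mpr h3
    push_cast at this
    linear_combination this
  have : ∀ x : ZMod 5, x^2 ≠ 3 := by decide
  exact this _ hz

lemma case2 (n : ℕ) (hn : n % 4 = 2) (m : ℤ) (hm : lucasL n = m^2 - 2) : False := by
  obtain ⟨h, hh, hodd⟩ : ∃ h, n = 2*h ∧ Odd h := ⟨n/2, by omega, ⟨n/4, by omega⟩⟩
  subst hh
  have hd : lucasL (2*h) = lucasL h^2 + 2 := by
    rw [Ldouble, hodd.neg_one_pow]; ring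
  set x := lucasL h with hx
  have hxpos : 1 ≤ x := Lpos _
  have hm2 : m^2 = x^2 + 4 := by rw [hd] at hm; linarith
  set a := |m| with hadef
  have ha0 : 0 ≤ a := abs_nonneg m
  have ha2 : a^2 = x^2 + 4 := by rw [hadef, ← hm2]; exact sq_abs m
  have hax : x < a := by nlinarith
  have hax1 : x + 1 ≤ a := hax
  have hx1 : x ≤ 1 := by nlinarith
  have hx1' : x = 1 := le_antisymm hx1 hxpos
  rw [hx1'] at ha2
  have h5 : a^2 = 5 := by linarith
  have ha3 : a ≤ 2 := by nlinarith
  interval_cases a <;> omega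

theorem stmt16' (n : ℕ) :
    (∃ m : ℤ, lucasL n = m ^ 2 - 2) ↔ 4 ∣ n := by
  constructor
  · rintro ⟨m, hm⟩
    by_contra h4
    have : n % 4 = 1 ∨ n % 4 = 2 ∨ n % 4 = 3 := by omega
    rcases this with h | h | h
    · exact case1 n h m hm
    · exact case2 n h m hm
    · exact case3 n h m hm
  · rintro ⟨k, hk⟩
    refine ⟨lucasL (2*k), ?_⟩
    have he : n = 2*(2*k) := by omega
    rw [he, Ldouble, (even_two_mul k).neg_one_pow]
    ring


end Stmt16

/-- **Theorem.** A Lucas number `L_n` is of the form `m² − 2` iff `4 ∣ n`. -/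
theorem stmt16 (n : ℕ) :
    (∃ m : ℤ, lucasL n = m ^ 2 - 2) ↔ 4 ∣ n := by
  exact Stmt16.stmt16' n
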